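/- arXiv:2005.08726 — 5 statements merged into one kernel-verified Lean document; each statement's English description precedes it below -/
import Mathlib

section
/- Let S be a Dirac bundle over a compact riemannian n-manifold with Dirac operator D and Weitzenböck operator R. A smooth section σ satisfies the twistor equation ∇_X σ + (1/n) X·Dσ = 0 for all tangent vectors X if and only if D²σ = (n/(n−1)) Rσ. -/
open scoped InnerProductSpace

/-!
Write `P_X σ = ∇_X σ + (1/n) X·Dσ` for the twistor operator. If `P σ = 0`, the Leibniz rule
turns `∇*∇σ` into `(1/n) D²σ`, and the Bochner identity `D² = ∇*∇ + R` gives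
`D²σ = (n/(n-1)) Rσ`. Conversely, expanding `Σᵢ ‖P_{eᵢ} σ‖²` over an orthonormal frame,
skew-adjointness of Clifford multiplication and `eᵢ·eᵢ = -1` give the twistor–Weitzenböck
formula `Σᵢ ‖P_{eᵢ} σ‖² = ⟪∇*∇σ - (1/n) D²σ, σ⟫`; the eigenvalue equation together with the
Bochner identity says exactly that `∇*∇σ = (1/n) D²σ`, so `P σ` vanishes on the frame, hence
everywhere.
-/

lemma forall_eq_zero_of_forall_frame_eq_zero {F VF Γ ι : Type*} [Semiring F]
    [AddCommMonoid VF] [AddCommMonoid Γ] [Module F VF] [Module F Γ]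
    (f : VF → Γ) (hadd : ∀ X Y, f (X + Y) = f X + f Y) (hsmul : ∀ (a : F) X, f (a • X) = a • f X)
    (e : ι → VF) (hspan : ∀ X : VF, X ∈ Submodule.span F (Set.range e))
    (he : ∀ i, f (e i) = 0) (X : VF) : f X = 0 := by
  let L : VF →ₗ[F] Γ := { toFun := f, map_add' := hadd, map_smul' := hsmul }
  have hL : L = 0 := LinearMap.ext_on_range (eq_top_iff.mpr fun X _ ↦ hspan X) he
  exact LinearMap.congr_fun hL X

lemma add_eq_div_sub_one_smul_iff {V : Type*} [AddCommGroup V] [Module ℝ V] {t : ℝ}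
    (h0 : t ≠ 0) (h1 : t - 1 ≠ 0) (l r : V) :
    l + r = (t / (t - 1)) • r ↔ l = t⁻¹ • (l + r) := by
  rw [eq_inv_smul_iff₀ h0, ← smul_right_inj h1, smul_smul, mul_div_cancel₀ _ h1]
  constructor <;> intro h <;> linear_combination (norm := module) h

section DiracBundle

variable {Γ VF ι : Type*} [NormedAddCommGroup Γ] [InnerProductSpace ℝ Γ]
  {nabla cl : VF → Γ →ₗ[ℝ] Γ} {e : ι → VF} {D lap : Γ →ₗ[ℝ] Γ}

lemma lap_eq_smul_dirac_sq_of_twistor [Fintype ι] {nabV : VF → VF → VF} {c : ℝ} {σ : Γ}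
    (hD : ∀ σ, D σ = ∑ i, cl (e i) (nabla (e i) σ))
    (hlap : ∀ σ, lap σ
      = -∑ j, (nabla (e j) (nabla (e j) σ) - nabla (nabV (e j) (e j)) σ))
    (hLeib : ∀ (X Y : VF) (σ : Γ),
      nabla X (cl Y σ) = cl (nabV X Y) σ + cl Y (nabla X σ))
    (htw : ∀ X : VF, nabla X σ + c • cl X (D σ) = 0) :
    lap σ = c • D (D σ) := by
  have hnabla : ∀ X, nabla X σ = -(c • cl X (D σ)) := fun X ↦ eq_neg_of_add_eq_zero_left (htw X)
  have hsecond : ∀ j, nabla (e j) (nabla (e j) σ) - nabla (nabV (e j) (e j)) σ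
      = -(c • cl (e j) (nabla (e j) (D σ))) := by
    intro j
    rw [hnabla (e j), hnabla (nabV (e j) (e j)), map_neg, map_smul, hLeib, smul_add]
    abel
  simp only [hlap, hsecond, Finset.sum_neg_distrib, neg_neg, ← Finset.smul_sum, ← hD]

lemma norm_cl_frame (hcl_skew : ∀ (X : VF) (σ τ : Γ), ⟪cl X σ, τ⟫_ℝ + ⟪σ, cl X τ⟫_ℝ = 0)
    (hcl_frame : ∀ (i : ι) (σ : Γ), cl (e i) (cl (e i) σ) = -σ) (i : ι) (τ : Γ) :
    ‖cl (e i) τ‖ = ‖τ‖ := by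
  have h := hcl_skew (e i) τ (cl (e i) τ)
  rw [hcl_frame, inner_neg_right, real_inner_self_eq_norm_sq, real_inner_comm,
    real_inner_self_eq_norm_sq] at h
  exact (sq_eq_sq₀ (norm_nonneg _) (norm_nonneg _)).mp (by linarith)

lemma sum_inner_nabla_cl_frame [Fintype ι] (hD : ∀ σ, D σ = ∑ i, cl (e i) (nabla (e i) σ))
    (hcl_skew : ∀ (X : VF) (σ τ : Γ), ⟪cl X σ, τ⟫_ℝ + ⟪σ, cl X τ⟫_ℝ = 0) (σ τ : Γ) :
    ∑ i, ⟪nabla (e i) σ, cl (e i) τ⟫_ℝ = -⟪D σ, τ⟫_ℝ := by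
  rw [hD, sum_inner, ← Finset.sum_neg_distrib]
  exact Finset.sum_congr rfl fun i _ ↦ eq_neg_of_add_eq_zero_right (hcl_skew _ _ _)

lemma sum_norm_twistor_sq [Fintype ι] (hD : ∀ σ, D σ = ∑ i, cl (e i) (nabla (e i) σ))
    (hD_sa : ∀ σ τ, ⟪D σ, τ⟫_ℝ = ⟪σ, D τ⟫_ℝ)
    (hlap_ip : ∀ σ τ, ⟪lap σ, τ⟫_ℝ = ∑ j, ⟪nabla (e j) σ, nabla (e j) τ⟫_ℝ)
    (hcl_skew : ∀ (X : VF) (σ τ : Γ), ⟪cl X σ, τ⟫_ℝ + ⟪σ, cl X τ⟫_ℝ = 0)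
    (hcl_frame : ∀ (i : ι) (σ : Γ), cl (e i) (cl (e i) σ) = -σ) (σ : Γ) :
    ∑ i, ‖nabla (e i) σ + (Fintype.card ι : ℝ)⁻¹ • cl (e i) (D σ)‖ ^ 2
      = ⟪lap σ - (Fintype.card ι : ℝ)⁻¹ • D (D σ), σ⟫_ℝ := by
  set n : ℝ := (Fintype.card ι : ℝ)
  have hexpand : ∀ i, ‖nabla (e i) σ + n⁻¹ • cl (e i) (D σ)‖ ^ 2
      = ‖nabla (e i) σ‖ ^ 2 + 2 * n⁻¹ * ⟪nabla (e i) σ, cl (e i) (D σ)⟫_ℝ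
        + n⁻¹ ^ 2 * ‖D σ‖ ^ 2 := by
    intro i
    rw [norm_add_sq_real, real_inner_smul_right, norm_smul, norm_cl_frame hcl_skew hcl_frame,
      Real.norm_eq_abs, mul_pow, sq_abs]
    ring
  have hnabla : ∑ i, ‖nabla (e i) σ‖ ^ 2 = ⟪lap σ, σ⟫_ℝ := by
    simp only [hlap_ip, real_inner_self_eq_norm_sq]
  have hcard : n * n⁻¹ ^ 2 = n⁻¹ := by
    rcases eq_or_ne n 0 with h | h
    · simp [h]
    · field_simp
  have hDσ : ‖D σ‖ ^ 2 = ⟪D (D σ), σ⟫_ℝ := by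
    rw [← real_inner_self_eq_norm_sq, hD_sa, real_inner_comm]
  simp only [hexpand, Finset.sum_add_distrib, ← Finset.mul_sum, hnabla,
    sum_inner_nabla_cl_frame hD hcl_skew, Finset.sum_const, Finset.card_univ, nsmul_eq_mul]
  rw [inner_sub_left, real_inner_smul_left, ← hDσ, real_inner_self_eq_norm_sq]
  linear_combination ‖D σ‖ ^ 2 * hcard

end DiracBundle

/-- (Theorem B, first part.)  Let `S` be a Dirac bundle over a compact
riemannian `n`-manifold `M`.  Here `Γ` is the space of smooth sections with the `L²` inner
product, `VF` the `C^∞(M)`-module (`F`-module) of vector fields, `cl X` Clifford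
multiplication by the vector field `X`, `nabla X` the covariant derivative, `e` a global
orthonormal frame spanning the vector fields over `F`, `nabV` the Levi-Civita connection,
`D` the Dirac operator, `lap = ∇*∇` the connection laplacian and `Rw` the Weitzenböck
curvature operator; the hypotheses are the structure equations and context facts
(generalized Bochner identity, formal self-adjointness on the compact manifold, Clifford
relations, Leibniz rule).  Conclusion: `σ` is a twistor section, i.e.
`∇_X σ + (1/n) X·Dσ = 0` for all `X`, if and only if `D²σ = (n/(n−1)) Rw σ`. -/
theorem twistor_section_iff_weitzenbock_eigen
    {Γ VF F : Type*} [NormedAddCommGroup Γ] [InnerProductSpace ℝ Γ]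
    [CommRing F] [AddCommGroup VF] [Module F VF] [Module F Γ]
    (n : ℕ) (hn : 2 ≤ n)
    (nabla cl : VF → Γ →ₗ[ℝ] Γ)
    (hnabla_add : ∀ X Y : VF, nabla (X + Y) = nabla X + nabla Y)
    (hnabla_smul : ∀ (f : F) (X : VF) (σ : Γ), nabla (f • X) σ = f • nabla X σ)
    (hcl_add : ∀ X Y : VF, cl (X + Y) = cl X + cl Y)
    (hcl_smul : ∀ (f : F) (X : VF) (σ : Γ), cl (f • X) σ = f • cl X σ)
    (hsmul_comm : ∀ (f : F) (r : ℝ) (σ : Γ), f • (r • σ) = r • (f • σ))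
    (e : Fin n → VF)
    (hspan : ∀ X : VF, X ∈ Submodule.span F (Set.range e))
    (nabV : VF → VF → VF)
    (D lap Rw : Γ →ₗ[ℝ] Γ)
    (hD : ∀ σ, D σ = ∑ i, cl (e i) (nabla (e i) σ))
    (hlap : ∀ σ, lap σ
      = -∑ j, (nabla (e j) (nabla (e j) σ) - nabla (nabV (e j) (e j)) σ))
    (hBochner : ∀ σ, D (D σ) = lap σ + Rw σ)
    (hD_sa : ∀ σ τ, ⟪D σ, τ⟫_ℝ = ⟪σ, D τ⟫_ℝ)
    (hlap_ip : ∀ σ τ, ⟪lap σ, τ⟫_ℝ = ∑ j, ⟪nabla (e j) σ, nabla (e j) τ⟫_ℝ)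
    (hcl_skew : ∀ (X : VF) (σ τ : Γ), ⟪cl X σ, τ⟫_ℝ + ⟪σ, cl X τ⟫_ℝ = 0)
    (hcl_frame : ∀ (i : Fin n) (σ : Γ), cl (e i) (cl (e i) σ) = -σ)
    (hLeib : ∀ (X Y : VF) (σ : Γ),
      nabla X (cl Y σ) = cl (nabV X Y) σ + cl Y (nabla X σ))
    (σ : Γ) :
    (∀ X : VF, nabla X σ + ((n : ℝ)⁻¹) • cl X (D σ) = 0) ↔
      D (D σ) = ((n : ℝ) / ((n : ℝ) - 1)) • Rw σ := by
  have hn2 : (2 : ℝ) ≤ n := by exact_mod_cast hn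
  rw [hBochner, add_eq_div_sub_one_smul_iff (by linarith) (by linarith), ← hBochner]
  refine ⟨lap_eq_smul_dirac_sq_of_twistor hD hlap hLeib, fun hlapσ ↦ ?_⟩
  have hsum := sum_norm_twistor_sq hD hD_sa hlap_ip hcl_skew hcl_frame σ
  simp only [Fintype.card_fin, hlapσ, sub_self, inner_zero_left] at hsum
  have hframe : ∀ i, nabla (e i) σ + (n : ℝ)⁻¹ • cl (e i) (D σ) = 0 := fun i ↦ by
    simpa using (Finset.sum_eq_zero_iff_of_nonneg fun j _ ↦ by positivity).mp hsum i
  refine forall_eq_zero_of_forall_frame_eq_zero (fun X ↦ nabla X σ + (n : ℝ)⁻¹ • cl X (D σ))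
    (fun X Y ↦ ?_) (fun a X ↦ ?_) e hspan hframe
  · simp only [hnabla_add, hcl_add, LinearMap.add_apply, smul_add]
    abel
  · rw [hnabla_smul, hcl_smul, ← hsmul_comm, smul_add]
end

section
/- Let σ be a twistor section of a Dirac bundle S over a riemannian n-manifold with n > 2. Then for every tangent vector X, ∇_X Dσ = (n/(n−2))[ (1/(n−1)) X·Rσ − (1/2) Ric_X σ ], where Ric_X σ = 2 Σᵢ eᵢ·R(eᵢ,X)σ. -/
/-!
Contract the curvature identity `R(X,Y)σ = (1/n)(X·∇_Y Dσ − Y·∇_X Dσ)` with Clifford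
multiplication over an orthonormal frame. Since `eᵢ·eᵢ = −1`, the first term contributes
`−n ∇_X Dσ`, and the anticommutation identity turns the second into `X·D²σ + 2∇_X Dσ`, so
`Ric_X σ = (2/n)(X·D²σ − (n−2)∇_X Dσ)`. For `n > 2` this can be solved for `∇_X Dσ`, and
`D²σ = (n/(n−1))Rσ` gives the formula.
-/

open Finset

theorem sum_apply_apply_of_apply_apply_eq_neg {ι Γ : Type*} [Fintype ι] [AddCommGroup Γ]
    [Module ℝ Γ] {c : ι → Γ →ₗ[ℝ] Γ} (hc : ∀ i τ, c i (c i τ) = -τ) (τ : Γ) :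
    ∑ i, c i (c i τ) = -((Fintype.card ι : ℝ) • τ) := by
  simp [hc, sum_const, card_univ, ← Nat.cast_smul_eq_nsmul ℝ]

theorem sum_frame_cl_curvature_of_twistor {Γ VF : Type*} [AddCommGroup Γ] [Module ℝ Γ]
    (n : ℕ) (nabla cl : VF → Γ →ₗ[ℝ] Γ) (e : Fin n → VF)
    (hcl_frame : ∀ (i : Fin n) (τ : Γ), cl (e i) (cl (e i) τ) = -τ)
    (D : Γ →ₗ[ℝ] Γ) (Rcurv : VF → VF → Γ →ₗ[ℝ] Γ) (σ : Γ) (X : VF)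
    (hanti : ∑ i, cl (e i) (cl X (nabla (e i) (D σ)))
      = -cl X (D (D σ)) - (2 : ℝ) • nabla X (D σ))
    (hRtwist : ∀ Y : VF,
      Rcurv Y X σ = ((n : ℝ)⁻¹) • (cl Y (nabla X (D σ)) - cl X (nabla Y (D σ)))) :
    ∑ i, cl (e i) (Rcurv (e i) X σ)
      = (n : ℝ)⁻¹ • (cl X (D (D σ)) - ((n : ℝ) - 2) • nabla X (D σ)) := by
  simp only [hRtwist, map_smul, map_sub, ← smul_sum, sum_sub_distrib, hanti,
    sum_apply_apply_of_apply_apply_eq_neg (c := fun i => cl (e i)) (hcl_frame · ·),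
    Fintype.card_fin]
  congr 1
  module

theorem twistor_nabla_D_formula_general
    {Γ VF : Type*} [AddCommGroup Γ] [Module ℝ Γ]
    (n : ℕ) (hn : 2 < n)
    (nabla cl : VF → Γ →ₗ[ℝ] Γ)
    (e : Fin n → VF)
    (hcl_frame : ∀ (i : Fin n) (τ : Γ), cl (e i) (cl (e i) τ) = -τ)
    (D Rw : Γ →ₗ[ℝ] Γ)
    (hanti : ∀ (X : VF) (τ : Γ),
      ∑ i, cl (e i) (cl X (nabla (e i) τ)) = - cl X (D τ) - (2 : ℝ) • nabla X τ)
    (Rcurv : VF → VF → Γ →ₗ[ℝ] Γ)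
    (Ric : VF → Γ →ₗ[ℝ] Γ)
    (hRic : ∀ (X : VF) (τ : Γ), Ric X τ = (2 : ℝ) • ∑ i, cl (e i) (Rcurv (e i) X τ))
    (σ : Γ)
    -- context facts for twistor sections
    (hD2 : D (D σ) = ((n : ℝ) / ((n : ℝ) - 1)) • Rw σ)
    (hRtwist : ∀ X Y : VF,
      Rcurv X Y σ = ((n : ℝ)⁻¹) • (cl X (nabla Y (D σ)) - cl Y (nabla X (D σ)))) :
    ∀ X : VF, nabla X (D σ)
      = ((n : ℝ) / ((n : ℝ) - 2)) •
          ((((n : ℝ) - 1)⁻¹) • cl X (Rw σ) - (2 : ℝ)⁻¹ • Ric X σ) := by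
  intro X
  have hn_gt : (2 : ℝ) < n := by exact_mod_cast hn
  have hn1 : (n : ℝ) - 1 ≠ 0 := by linarith
  have hn2 : (n : ℝ) - 2 ≠ 0 := by linarith
  have hRicX : Ric X σ
      = (2 : ℝ) • (n : ℝ)⁻¹ • (cl X (D (D σ)) - ((n : ℝ) - 2) • nabla X (D σ)) := by
    rw [hRic, sum_frame_cl_curvature_of_twistor n nabla cl e hcl_frame D Rcurv σ X
      (hanti X (D σ)) (fun Y => hRtwist Y X)]
  rw [hRicX, hD2, map_smul]
  match_scalars <;> field_simp
  ring

/-- (Theorem B, second part.)  For a twistor section `σ` of a Dirac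
bundle over a riemannian `n`-manifold with `n > 2`, and every vector field `X`,
`∇_X Dσ = (n/(n−2)) [ (1/(n−1)) X·Rσ − (1/2) Ric_X σ ]`, where
`Ric_X σ = 2 Σᵢ eᵢ·R(eᵢ,X)σ` is the Ricci curvature operator.  The hypotheses are the
structure equations in a global orthonormal frame `e` and the context facts valid for
twistor sections: the Clifford frame relations, the anticommutation identity
`Σᵢ eᵢ·X·∇_{eᵢ}τ = −X·Dτ − 2∇_X τ`, the identity `D²σ = (n/(n−1)) Rw σ`, and
`R(X,Y)σ = (1/n)(X·∇_Y Dσ − Y·∇_X Dσ)`. -/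
theorem twistor_nabla_D_formula
    {Γ VF : Type*} [AddCommGroup Γ] [Module ℝ Γ] [AddCommGroup VF]
    (n : ℕ) (hn : 2 < n)
    (nabla cl : VF → Γ →ₗ[ℝ] Γ)
    (e : Fin n → VF)
    (hcl_frame : ∀ (i : Fin n) (τ : Γ), cl (e i) (cl (e i) τ) = -τ)
    (D Rw : Γ →ₗ[ℝ] Γ)
    (hD : ∀ τ, D τ = ∑ i, cl (e i) (nabla (e i) τ))
    (hanti : ∀ (X : VF) (τ : Γ),
      ∑ i, cl (e i) (cl X (nabla (e i) τ)) = - cl X (D τ) - (2 : ℝ) • nabla X τ)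
    (lie : VF → VF → VF)
    (Rcurv : VF → VF → Γ →ₗ[ℝ] Γ)
    (hR : ∀ (X Y : VF) (τ : Γ),
      Rcurv X Y τ = nabla X (nabla Y τ) - nabla Y (nabla X τ) - nabla (lie X Y) τ)
    (Ric : VF → Γ →ₗ[ℝ] Γ)
    (hRic : ∀ (X : VF) (τ : Γ), Ric X τ = (2 : ℝ) • ∑ i, cl (e i) (Rcurv (e i) X τ))
    (σ : Γ)
    (htwistor : ∀ X : VF, nabla X σ + ((n : ℝ)⁻¹) • cl X (D σ) = 0)
    -- context facts for twistor sections
    (hD2 : D (D σ) = ((n : ℝ) / ((n : ℝ) - 1)) • Rw σ)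
    (hRtwist : ∀ X Y : VF,
      Rcurv X Y σ = ((n : ℝ)⁻¹) • (cl X (nabla Y (D σ)) - cl Y (nabla X (D σ)))) :
    ∀ X : VF, nabla X (D σ)
      = ((n : ℝ) / ((n : ℝ) - 2)) •
          ((((n : ℝ) - 1)⁻¹) • cl X (Rw σ) - (2 : ℝ)⁻¹ • Ric X σ) :=
  twistor_nabla_D_formula_general n hn nabla cl e hcl_frame D Rw hanti Rcurv Ric hRic σ hD2 hRtwist
end

section
/- Let S be a Dirac bundle and f: M → ℝ smooth. Define the modified connection ∇^f_X σ = ∇_X σ + f X·σ. Then ∇^f is metric, its connection laplacian satisfies ∇^{f*}∇^f σ = ∇*∇σ − (∇f)·σ − 2f Dσ + n f² σ, and (D − f)²σ = ∇^{f*}∇^f σ + Rσ + (1−n) f² σ. -/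
open scoped InnerProductSpace

/-!
Since Clifford multiplication by a vector is skew-adjoint, the zeroth-order term `f X·σ` drops
out of the metric condition, so `∇^f` is metric. Expanding `∇^f_{e_j}∇^f_{e_j} − ∇^f_{∇_{e_j}e_j}`
with the Leibniz rules leaves, beyond the old second derivative, the terms `e_j(f) e_j·σ`,
`2f e_j·∇_{e_j}σ` and `f² e_j·e_j·σ = −f² σ`; summing over the frame gives the laplacian
formula. The last identity follows from it, the Leibniz rule for `D` and the Bochner identity.
-/

namespace DiracBundle

variable {M V S : Type*} [NormedAddCommGroup V] [InnerProductSpace ℝ V]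
  [NormedAddCommGroup S] [InnerProductSpace ℝ S]

def modifiedConnection (c : V →ₗ[ℝ] S →ₗ[ℝ] S) (nabS : (M → V) → (M → S) →ₗ[ℝ] (M → S))
    (f : M → ℝ) (X : M → V) (σ : M → S) : M → S :=
  fun p => nabS X σ p + f p • c (X p) (σ p)

def connectionLaplacian {n : ℕ} (e : Fin n → M → V) (nabV : (M → V) → (M → V) → (M → V))
    (nab : (M → V) → (M → S) → (M → S)) (σ : M → S) : M → S :=
  fun p => -∑ j, (nab (e j) (nab (e j) σ) p - nab (nabV (e j) (e j)) σ p)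

def dirac {n : ℕ} (e : Fin n → M → V) (c : V →ₗ[ℝ] S →ₗ[ℝ] S)
    (nabS : (M → V) → (M → S) →ₗ[ℝ] (M → S)) (σ : M → S) : M → S :=
  fun p => ∑ i, c (e i p) (nabS (e i) σ p)

theorem dirac_sub {n : ℕ} (e : Fin n → M → V) (c : V →ₗ[ℝ] S →ₗ[ℝ] S)
    (nabS : (M → V) → (M → S) →ₗ[ℝ] (M → S)) (σ τ : M → S) (p : M) :
    dirac e c nabS (fun q => σ q - τ q) p = dirac e c nabS σ p - dirac e c nabS τ p := by
  have hsub : (fun q => σ q - τ q) = σ - τ := rfl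
  simp only [dirac, hsub, map_sub, Pi.sub_apply, Finset.sum_sub_distrib]

theorem clifford_mul_self {c : V →ₗ[ℝ] S →ₗ[ℝ] S}
    (hrel : ∀ (v w : V) (s : S), c v (c w s) + c w (c v s) = (-(2 * ⟪v, w⟫_ℝ)) • s)
    (v : V) (s : S) : c v (c v s) = (-⟪v, v⟫_ℝ) • s := by
  have h : (2 : ℝ) • c v (c v s) = (2 : ℝ) • ((-⟪v, v⟫_ℝ) • s) := by
    rw [two_smul, hrel, smul_smul]
    ring_nf
  exact smul_right_injective S two_ne_zero h

theorem modifiedConnection_metric {c : V →ₗ[ℝ] S →ₗ[ℝ] S}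
    (hskew : ∀ (v : V) (s t : S), ⟪c v s, t⟫_ℝ + ⟪s, c v t⟫_ℝ = 0)
    {Xd : (M → V) → (M → ℝ) →ₗ[ℝ] (M → ℝ)} {nabS : (M → V) → (M → S) →ₗ[ℝ] (M → S)}
    (hmetric : ∀ (X : M → V) (σ τ : M → S),
      Xd X (fun p => ⟪σ p, τ p⟫_ℝ)
        = fun p => ⟪nabS X σ p, τ p⟫_ℝ + ⟪σ p, nabS X τ p⟫_ℝ)
    (f : M → ℝ) (X : M → V) (σ τ : M → S) :
    Xd X (fun p => ⟪σ p, τ p⟫_ℝ)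
      = fun p => ⟪modifiedConnection c nabS f X σ p, τ p⟫_ℝ
        + ⟪σ p, modifiedConnection c nabS f X τ p⟫_ℝ := by
  rw [hmetric]
  funext p
  simp only [modifiedConnection, inner_add_left, inner_add_right, real_inner_smul_left,
    real_inner_smul_right]
  linear_combination (-f p) * hskew (X p) (σ p) (τ p)

theorem modifiedConnection_second_order {c : V →ₗ[ℝ] S →ₗ[ℝ] S}
    {Xd : (M → V) → (M → ℝ) →ₗ[ℝ] (M → ℝ)} {nabV : (M → V) → (M → V) → (M → V)}
    {nabS : (M → V) → (M → S) →ₗ[ℝ] (M → S)}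
    (hLeibS : ∀ (X : M → V) (g : M → ℝ) (σ : M → S),
      nabS X (fun p => g p • σ p) = fun p => Xd X g p • σ p + g p • nabS X σ p)
    (hLeibc : ∀ (X Y : M → V) (σ : M → S),
      nabS X (fun p => c (Y p) (σ p))
        = fun p => c (nabV X Y p) (σ p) + c (Y p) (nabS X σ p))
    (f : M → ℝ) (X : M → V) (σ : M → S) (p : M) :
    modifiedConnection c nabS f X (modifiedConnection c nabS f X σ) p
        - modifiedConnection c nabS f (nabV X X) σ p
      = (nabS X (nabS X σ) p - nabS (nabV X X) σ p) + Xd X f p • c (X p) (σ p)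
        + (2 * f p) • c (X p) (nabS X σ p) + (f p ^ 2) • c (X p) (c (X p) (σ p)) := by
  have hsplit : modifiedConnection c nabS f X σ
      = nabS X σ + fun q => f q • c (X q) (σ q) := rfl
  have hterm : nabS X (fun q => f q • c (X q) (σ q)) p
      = Xd X f p • c (X p) (σ p)
        + f p • (c (nabV X X p) (σ p) + c (X p) (nabS X σ p)) := by
    rw [hLeibS, hLeibc]
  rw [hsplit]
  simp only [modifiedConnection, map_add, Pi.add_apply, hterm, map_smul]
  module

theorem connectionLaplacian_modifiedConnection {n : ℕ} {c : V →ₗ[ℝ] S →ₗ[ℝ] S}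
    (hrel : ∀ (v w : V) (s : S), c v (c w s) + c w (c v s) = (-(2 * ⟪v, w⟫_ℝ)) • s)
    {e : Fin n → M → V} (hunit : ∀ (j : Fin n) (p : M), ⟪e j p, e j p⟫_ℝ = 1)
    {Xd : (M → V) → (M → ℝ) →ₗ[ℝ] (M → ℝ)} {nabV : (M → V) → (M → V) → (M → V)}
    {nabS : (M → V) → (M → S) →ₗ[ℝ] (M → S)}
    (hLeibS : ∀ (X : M → V) (g : M → ℝ) (σ : M → S),
      nabS X (fun p => g p • σ p) = fun p => Xd X g p • σ p + g p • nabS X σ p)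
    (hLeibc : ∀ (X Y : M → V) (σ : M → S),
      nabS X (fun p => c (Y p) (σ p))
        = fun p => c (nabV X Y p) (σ p) + c (Y p) (nabS X σ p))
    {grad : (M → ℝ) → (M → V)}
    (hgrad : ∀ (g : M → ℝ) (p : M) (s : S),
      c (grad g p) s = ∑ i, Xd (e i) g p • c (e i p) s)
    (f : M → ℝ) (σ : M → S) (p : M) :
    connectionLaplacian e nabV (modifiedConnection c nabS f) σ p
      = connectionLaplacian e nabV (fun X => nabS X) σ p - c (grad f p) (σ p)
        - (2 * f p) • dirac e c nabS σ p + ((n : ℝ) * f p ^ 2) • σ p := by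
  have hterm (j : Fin n) := modifiedConnection_second_order hLeibS hLeibc f (e j) σ p
  simp only [clifford_mul_self hrel, hunit] at hterm
  simp only [connectionLaplacian, dirac, hterm, hgrad, Finset.sum_add_distrib,
    Finset.sum_sub_distrib, Finset.smul_sum, Finset.sum_const, Finset.card_univ,
    Fintype.card_fin]
  module

end DiracBundle

open DiracBundle in
/-- For a Dirac bundle `S` over a riemannian `n`-manifold and a smooth
function `f : M → ℝ`, the modified connection `∇^f_X σ = ∇_X σ + f X·σ` is metric, its
connection laplacian satisfies `∇^{f*}∇^f σ = ∇*∇σ − (∇f)·σ − 2f Dσ + n f² σ`, and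
`(D − f)²σ = ∇^{f*}∇^f σ + Rσ + (1−n) f² σ`.  Sections are modelled as maps `M → S`
(with `S` the fiber), `e` is an orthonormal frame, `Xd` differentiation of functions along
vector fields, `nabV`/`nabS` the connections, `grad` the gradient, `D` the Dirac operator,
`lap` the connection laplacian, `Rw` the Weitzenböck operator; the hypotheses are the
Dirac-bundle structure equations and the generalized Bochner identity. -/
theorem modified_connection_identities
    {M V S : Type*} [NormedAddCommGroup V] [InnerProductSpace ℝ V]
    [NormedAddCommGroup S] [InnerProductSpace ℝ S]
    (n : ℕ)
    (c : V →ₗ[ℝ] S →ₗ[ℝ] S)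
    (hskew : ∀ (v : V) (s t : S), ⟪c v s, t⟫_ℝ + ⟪s, c v t⟫_ℝ = 0)
    (hrel : ∀ (v w : V) (s : S), c v (c w s) + c w (c v s) = (-(2 * ⟪v, w⟫_ℝ)) • s)
    (e : Fin n → M → V)
    (horth : ∀ (p : M) (i j : Fin n), ⟪e i p, e j p⟫_ℝ = if i = j then 1 else 0)
    (Xd : (M → V) → (M → ℝ) →ₗ[ℝ] (M → ℝ))
    (nabV : (M → V) → (M → V) → (M → V))
    (nabS : (M → V) → (M → S) →ₗ[ℝ] (M → S))
    (hmetric : ∀ (X : M → V) (σ τ : M → S),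
      Xd X (fun p => ⟪σ p, τ p⟫_ℝ)
        = fun p => ⟪nabS X σ p, τ p⟫_ℝ + ⟪σ p, nabS X τ p⟫_ℝ)
    (hLeibS : ∀ (X : M → V) (g : M → ℝ) (σ : M → S),
      nabS X (fun p => g p • σ p) = fun p => Xd X g p • σ p + g p • nabS X σ p)
    (hLeibc : ∀ (X Y : M → V) (σ : M → S),
      nabS X (fun p => c (Y p) (σ p))
        = fun p => c (nabV X Y p) (σ p) + c (Y p) (nabS X σ p))
    (D : (M → S) → (M → S))
    (hD : ∀ (σ : M → S) (p : M), D σ p = ∑ i, c (e i p) (nabS (e i) σ p))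
    (grad : (M → ℝ) → (M → V))
    (hgrad : ∀ (g : M → ℝ) (p : M) (s : S),
      c (grad g p) s = ∑ i, Xd (e i) g p • c (e i p) s)
    (hDLeib : ∀ (g : M → ℝ) (σ : M → S) (p : M),
      D (fun q => g q • σ q) p = c (grad g p) (σ p) + g p • D σ p)
    (lap : (M → S) → (M → S))
    (hlap : ∀ (σ : M → S) (p : M),
      lap σ p = -∑ j, (nabS (e j) (nabS (e j) σ) p - nabS (nabV (e j) (e j)) σ p))
    (Rw : (M → S) → (M → S))
    (hBochner : ∀ (σ : M → S) (p : M), D (D σ) p = lap σ p + Rw σ p)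
    (f : M → ℝ)
    (nabF : (M → V) → (M → S) → (M → S))
    (hnabF : ∀ (X : M → V) (σ : M → S) (p : M),
      nabF X σ p = nabS X σ p + f p • c (X p) (σ p))
    (lapF : (M → S) → (M → S))
    (hlapF : ∀ (σ : M → S) (p : M),
      lapF σ p = -∑ j, (nabF (e j) (nabF (e j) σ) p - nabF (nabV (e j) (e j)) σ p)) :
    -- (1) `∇^f` is metric
    (∀ (X : M → V) (σ τ : M → S),
      Xd X (fun p => ⟪σ p, τ p⟫_ℝ)
        = fun p => ⟪nabF X σ p, τ p⟫_ℝ + ⟪σ p, nabF X τ p⟫_ℝ) ∧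
    -- (2) the laplacian of the modified connection
    (∀ (σ : M → S) (p : M),
      lapF σ p = lap σ p - c (grad f p) (σ p) - (2 * f p) • D σ p
        + ((n : ℝ) * f p ^ 2) • σ p) ∧
    -- (3) `(D − f)²σ = ∇^{f*}∇^f σ + Rσ + (1−n) f² σ`
    (∀ (σ : M → S) (p : M),
      D (fun q => D σ q - f q • σ q) p - f p • (D σ p - f p • σ p)
        = lapF σ p + Rw σ p + ((1 - (n : ℝ)) * f p ^ 2) • σ p) := by
  have hD' : D = dirac e c nabS := funext fun σ => funext (hD σ)
  have hnabF' : nabF = modifiedConnection c nabS f :=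
    funext fun X => funext fun σ => funext (hnabF X σ)
  have hlap' : lap = connectionLaplacian e nabV (fun X => nabS X) :=
    funext fun σ => funext (hlap σ)
  have hlapF' : lapF = connectionLaplacian e nabV nabF := funext fun σ => funext (hlapF σ)
  subst hD' hlapF' hnabF' hlap'
  have hunit (j : Fin n) (p : M) : ⟪e j p, e j p⟫_ℝ = 1 := by
    rw [horth, if_pos rfl]
  have hlapF := connectionLaplacian_modifiedConnection hrel hunit hLeibS hLeibc hgrad f
  refine ⟨modifiedConnection_metric hskew hmetric f, hlapF, fun σ p => ?_⟩
  rw [dirac_sub, hBochner, hDLeib, hlapF]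
  module
end

section
/- Let S be a Dirac bundle over a compact riemannian n-manifold M. A section σ is a Killing section with constant λ (i.e. ∇_X σ = λX·σ for all X) if and only if Dσ = −nλσ and Rσ = λ²n(n−1)σ, where D is the Dirac operator and R the Weitzenböck operator. -/
open scoped InnerProductSpace

/-!
A Killing section with constant `λ` is a twistor section whose Dirac eigenvalue is `-nλ`
(contract `∇_{e_i} σ = λ e_i·σ` with `e_i·`), so the twistor characterization
`D²σ = (n/(n-1)) R σ` forces `R σ = λ²n(n-1)σ`. Conversely, these two eigenvalue equations
make the right-hand side of the identity for `(D + λ)²σ` collapse to the rough Laplacian of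
the modified connection `∇^{-λ}`, which therefore vanishes, so `σ` is `∇^{-λ}`-parallel,
i.e. Killing with constant `λ`.
-/

section KillingSection

variable {Γ VF : Type*} [AddCommGroup Γ] [Module ℝ Γ] {n : ℕ}
  {nabla cl : VF → Γ →ₗ[ℝ] Γ} {D Rw : Γ →ₗ[ℝ] Γ} {lam : ℝ} {σ : Γ}

theorem dirac_eq_of_killing (e : Fin n → VF)
    (hcl_frame : ∀ (i : Fin n) (σ : Γ), cl (e i) (cl (e i) σ) = -σ)
    (hD : ∀ σ, D σ = ∑ i, cl (e i) (nabla (e i) σ))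
    (hkilling : ∀ X, nabla X σ = lam • cl X σ) :
    D σ = (-(n : ℝ) * lam) • σ := by
  simp only [hD, hkilling, map_smul, hcl_frame, Finset.sum_const, Finset.card_univ,
    Fintype.card_fin, ← Nat.cast_smul_eq_nsmul ℝ, smul_smul]
  module

theorem twistor_of_killing (hn : (n : ℝ) ≠ 0)
    (hkilling : ∀ X, nabla X σ = lam • cl X σ) (hDσ : D σ = (-(n : ℝ) * lam) • σ) :
    ∀ X, nabla X σ + ((n : ℝ)⁻¹) • cl X (D σ) = 0 := by
  intro X
  have hcoeff : lam + (n : ℝ)⁻¹ * (-(n : ℝ) * lam) = 0 := by field_simp; ring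
  rw [hkilling, hDσ, map_smul, smul_smul, ← add_smul, hcoeff, zero_smul]

theorem weitzenboeck_eq_of_dirac_eq (hn : 2 ≤ n) (hDσ : D σ = (-(n : ℝ) * lam) • σ)
    (htwistor : D (D σ) = ((n : ℝ) / ((n : ℝ) - 1)) • Rw σ) :
    Rw σ = (lam ^ 2 * n * ((n : ℝ) - 1)) • σ := by
  have hn' : (2 : ℝ) ≤ n := by exact_mod_cast hn
  have hn0 : (n : ℝ) ≠ 0 := by positivity
  have hn1 : (n : ℝ) - 1 ≠ 0 := by linarith
  rw [hDσ, map_smul, hDσ, smul_smul] at htwistor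
  calc Rw σ = (((n : ℝ) - 1) / n) • (((n : ℝ) / ((n : ℝ) - 1)) • Rw σ) := by
        rw [smul_smul, div_mul_div_cancel₀ hn0, div_self hn1, one_smul]
    _ = (lam ^ 2 * n * ((n : ℝ) - 1)) • σ := by
        rw [← htwistor, smul_smul]
        congr 1
        field_simp

theorem killing_of_dirac_eq_of_weitzenboeck_eq (lapF : ℝ → Γ →ₗ[ℝ] Γ)
    (hlapF : ∀ (μ : ℝ) (σ : Γ), D (D σ) - (2 * μ) • D σ + (μ ^ 2) • σ
      = lapF μ σ + Rw σ + ((1 - (n : ℝ)) * μ ^ 2) • σ)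
    (hlapF_parallel : ∀ (μ : ℝ) (σ : Γ), lapF μ σ = 0 → ∀ X, nabla X σ + μ • cl X σ = 0)
    (hDσ : D σ = (-(n : ℝ) * lam) • σ) (hRw : Rw σ = (lam ^ 2 * n * ((n : ℝ) - 1)) • σ) :
    ∀ X, nabla X σ = lam • cl X σ := by
  have hlap : lapF (-lam) σ = 0 := by
    have h := hlapF (-lam) σ
    rw [hDσ, map_smul, hDσ, hRw] at h
    linear_combination (norm := module) -h
  intro X
  rw [← sub_eq_zero, sub_eq_add_neg, ← neg_smul]
  exact hlapF_parallel (-lam) σ hlap X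

end KillingSection

theorem killing_section_characterization_general
    {Γ VF : Type*} [NormedAddCommGroup Γ] [InnerProductSpace ℝ Γ]
    (n : ℕ) (hn : 2 ≤ n)
    (nabla cl : VF → Γ →ₗ[ℝ] Γ)
    (e : Fin n → VF)
    (hcl_frame : ∀ (i : Fin n) (σ : Γ), cl (e i) (cl (e i) σ) = -σ)
    (D Rw : Γ →ₗ[ℝ] Γ)
    (hD : ∀ σ, D σ = ∑ i, cl (e i) (nabla (e i) σ))
    (htwistor_char : ∀ σ : Γ,
      (∀ X : VF, nabla X σ + ((n : ℝ)⁻¹) • cl X (D σ) = 0) →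
      D (D σ) = ((n : ℝ) / ((n : ℝ) - 1)) • Rw σ)
    (lapF : ℝ → Γ →ₗ[ℝ] Γ)
    (hlapF : ∀ (μ : ℝ) (σ : Γ),
      D (D σ) - (2 * μ) • D σ + (μ ^ 2) • σ
        = lapF μ σ + Rw σ + ((1 - (n : ℝ)) * μ ^ 2) • σ)
    (hlapF_parallel : ∀ (μ : ℝ) (σ : Γ), lapF μ σ = 0 →
      ∀ X : VF, nabla X σ + μ • cl X σ = 0)
    (lam : ℝ) (σ : Γ) :
    (∀ X : VF, nabla X σ = lam • cl X σ) ↔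
      (D σ = (-(n : ℝ) * lam) • σ ∧ Rw σ = (lam ^ 2 * n * ((n : ℝ) - 1)) • σ) := by
  constructor
  · intro hkilling
    have hDσ := dirac_eq_of_killing e hcl_frame hD hkilling
    have hn0 : (n : ℝ) ≠ 0 := by exact_mod_cast (by omega : n ≠ 0)
    exact ⟨hDσ, weitzenboeck_eq_of_dirac_eq hn hDσ
      (htwistor_char σ (twistor_of_killing hn0 hkilling hDσ))⟩
  · rintro ⟨hDσ, hRw⟩
    exact killing_of_dirac_eq_of_weitzenboeck_eq lapF hlapF hlapF_parallel hDσ hRw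

/-- (Theorem C.)  Let `S` be a Dirac bundle over a compact riemannian
`n`-manifold with Dirac operator `D` and Weitzenböck operator `Rw`.  A section `σ` is a
Killing section with constant `λ` (`∇_X σ = λ X·σ` for all vector fields `X`) if and only
if `Dσ = −nλσ` and `Rw σ = λ²n(n−1)σ`.  The hypotheses are the structure equations
(Dirac operator in a global orthonormal frame, Clifford frame relation) and the context
facts: the twistor characterization `D²σ = (n/(n−1)) Rw σ` for twistor sections; and the
modified-connection identity `(D−μ)²σ = ∇^{μ*}∇^μ σ + Rw σ + (1−n)μ²σ` with
`∇^μ_X σ = ∇_X σ + μ X·σ`, together with the fact (valid on the compact manifold `M`) that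
`∇^{μ*}∇^μ σ = 0` implies that `σ` is `∇^μ`-parallel. -/
theorem killing_section_characterization
    {Γ VF : Type*} [NormedAddCommGroup Γ] [InnerProductSpace ℝ Γ]
    (n : ℕ) (hn : 2 ≤ n)
    (nabla cl : VF → Γ →ₗ[ℝ] Γ)
    (e : Fin n → VF)
    (hcl_frame : ∀ (i : Fin n) (σ : Γ), cl (e i) (cl (e i) σ) = -σ)
    (D Rw : Γ →ₗ[ℝ] Γ)
    (hD : ∀ σ, D σ = ∑ i, cl (e i) (nabla (e i) σ))
    (htwistor_char : ∀ σ : Γ,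
      (∀ X : VF, nabla X σ + ((n : ℝ)⁻¹) • cl X (D σ) = 0) →
      D (D σ) = ((n : ℝ) / ((n : ℝ) - 1)) • Rw σ)
    (lapF : ℝ → Γ →ₗ[ℝ] Γ)
    (hlapF : ∀ (μ : ℝ) (σ : Γ),
      D (D σ) - (2 * μ) • D σ + (μ ^ 2) • σ
        = lapF μ σ + Rw σ + ((1 - (n : ℝ)) * μ ^ 2) • σ)
    (hlapF_nonneg : ∀ (μ : ℝ) (σ : Γ), 0 ≤ ⟪lapF μ σ, σ⟫_ℝ)
    (hlapF_zero : ∀ (μ : ℝ) (σ : Γ), ⟪lapF μ σ, σ⟫_ℝ = 0 → lapF μ σ = 0)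
    (hlapF_parallel : ∀ (μ : ℝ) (σ : Γ), lapF μ σ = 0 →
      ∀ X : VF, nabla X σ + μ • cl X σ = 0)
    (lam : ℝ) (σ : Γ) :
    (∀ X : VF, nabla X σ = lam • cl X σ) ↔
      (D σ = (-(n : ℝ) * lam) • σ ∧ Rw σ = (lam ^ 2 * n * ((n : ℝ) - 1)) • σ) :=
  killing_section_characterization_general n hn nabla cl e hcl_frame D Rw hD htwistor_char lapF
    hlapF hlapF_parallel lam σ
end

section
/- Let S be a Dirac bundle over a compact riemannian n-manifold and let μ be an eigenvalue of the Dirac operator D. Then μ² ≥ (n/(n−1)) R₀, where R₀ = min over unit-length σ ∈ S of ⟨Rσ,σ⟩, R the Weitzenböck operator. -/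
open scoped InnerProductSpace

/-! Since `D σ = μ σ`, pairing the modified-connection identity with `σ` gives
`(μ - f)² ‖σ‖² = ‖∇^f σ‖² + (Rσ, σ) + (1 - n) f² ‖σ‖² ≥ (R₀ + (1 - n) f²) ‖σ‖²`, so
`R₀ ≤ (μ - f)² + (n - 1) f²` for every real `f`. The right-hand side is minimal at
`f = μ / n`, where it equals `(n - 1) μ² / n`. -/

section

variable {Γ : Type*} [NormedAddCommGroup Γ] [InnerProductSpace ℝ Γ]

theorem mul_inner_self_le_inner_of_pointwise {M : Type*} (ip : Γ → Γ → M → ℝ)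
    (hip_sub : ∀ (σ τ ρ : Γ) (p : M), ip (σ - τ) ρ p = ip σ ρ p - ip τ ρ p)
    (hip_smul : ∀ (r : ℝ) (σ τ : Γ) (p : M), ip (r • σ) τ p = r * ip σ τ p)
    (hint : ∀ σ τ : Γ, (∀ p, 0 ≤ ip σ τ p) → 0 ≤ ⟪σ, τ⟫_ℝ)
    {c : ℝ} {σ τ : Γ} (h : ∀ p, c * ip σ σ p ≤ ip τ σ p) :
    c * ⟪σ, σ⟫_ℝ ≤ ⟪τ, σ⟫_ℝ := by
  have hdiff : 0 ≤ ⟪τ - c • σ, σ⟫_ℝ :=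
    hint _ _ fun p => by rw [hip_sub, hip_smul]; linarith [h p]
  rw [inner_sub_left, real_inner_smul_left] at hdiff
  linarith

theorem le_sq_sub_add_mul_sq_of_eigenvector {D : Γ →ₗ[ℝ] Γ} {L Rw : Γ → Γ} {n R₀ μ : ℝ}
    (f : ℝ) {σ : Γ} (heig : D σ = μ • σ)
    (hid : D (D σ) - (2 * f) • D σ + f ^ 2 • σ = L σ + Rw σ + ((1 - n) * f ^ 2) • σ)
    (hL : 0 ≤ ⟪L σ, σ⟫_ℝ) (hRw : R₀ * ⟪σ, σ⟫_ℝ ≤ ⟪Rw σ, σ⟫_ℝ) (hσ : σ ≠ 0) :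
    R₀ ≤ (μ - f) ^ 2 + (n - 1) * f ^ 2 := by
  have hsq : D (D σ) - (2 * f) • D σ + f ^ 2 • σ = (μ - f) ^ 2 • σ := by
    rw [heig, map_smul, heig, smul_smul, smul_smul, ← sub_smul, ← add_smul]
    congr 1
    ring
  have hpair := congrArg (⟪·, σ⟫_ℝ) (hsq.symm.trans hid)
  simp only [inner_add_left, real_inner_smul_left] at hpair
  have hpos : 0 < ⟪σ, σ⟫_ℝ := real_inner_self_pos.mpr hσ
  nlinarith

theorem sq_sub_div_add_mul_sq_div {n : ℝ} (hn : n ≠ 0) (μ : ℝ) :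
    (μ - μ / n) ^ 2 + (n - 1) * (μ / n) ^ 2 = (n - 1) / n * μ ^ 2 := by
  field_simp
  ring

end

theorem dirac_eigenvalue_lower_bound_general
    {M Γ : Type*} [NormedAddCommGroup Γ] [InnerProductSpace ℝ Γ]
    (n : ℕ) (hn : 2 ≤ n)
    (D Rw : Γ →ₗ[ℝ] Γ)
    (ip : Γ → Γ → M → ℝ)
    (hip_sub : ∀ (σ τ ρ : Γ) (p : M), ip (σ - τ) ρ p = ip σ ρ p - ip τ ρ p)
    (hip_smul : ∀ (r : ℝ) (σ τ : Γ) (p : M), ip (r • σ) τ p = r * ip σ τ p)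
    (hint : ∀ σ τ : Γ, (∀ p, 0 ≤ ip σ τ p) → 0 ≤ ⟪σ, τ⟫_ℝ)
    (lapF : ℝ → Γ →ₗ[ℝ] Γ)
    (hlapF : ∀ (f : ℝ) (σ : Γ),
      D (D σ) - (2 * f) • D σ + (f ^ 2) • σ
        = lapF f σ + Rw σ + ((1 - (n : ℝ)) * f ^ 2) • σ)
    (hlapF_nonneg : ∀ (f : ℝ) (σ : Γ), 0 ≤ ⟪lapF f σ, σ⟫_ℝ)
    (R0 : ℝ)
    (hR0 : ∀ (σ : Γ) (p : M), R0 * ip σ σ p ≤ ip (Rw σ) σ p)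
    (μ : ℝ) (σ : Γ) (hσ : σ ≠ 0) (heig : D σ = μ • σ) :
    ((n : ℝ) / ((n : ℝ) - 1)) * R0 ≤ μ ^ 2 := by
  have hn1 : (1 : ℝ) < n := by exact_mod_cast hn
  have hRw := mul_inner_self_le_inner_of_pointwise ip hip_sub hip_smul hint (hR0 σ)
  have hbound := le_sq_sub_add_mul_sq_of_eigenvector (μ / n) heig (hlapF (μ / n) σ)
    (hlapF_nonneg _ σ) hRw hσ
  rw [sq_sub_div_add_mul_sq_div (by positivity)] at hbound
  calc (n : ℝ) / (n - 1) * R0 ≤ n / (n - 1) * ((n - 1) / n * μ ^ 2) := by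
        gcongr
    _ = μ ^ 2 := by
        field_simp [(by linarith : (n : ℝ) - 1 ≠ 0)]

/-- Let `S` be a Dirac bundle over a compact riemannian `n`-manifold and
let `μ` be an eigenvalue of the Dirac operator `D`.  Then `μ² ≥ (n/(n−1)) R₀`, where
`R₀ = min_{|σ|=1} ⟨Rw σ, σ⟩` is the minimum of the (pointwise self-adjoint) Weitzenböck
operator over unit vectors: equivalently, `R₀ ⟨σ,σ⟩ₚ ≤ ⟨Rw σ, σ⟩ₚ` at every point `p`.
Here `Γ` is the space of smooth sections with `L²` inner product, `ip` the pointwise inner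
product, and the hypotheses are the context facts: the modified-connection identity
`(D−μ)²σ = ∇^{μ*}∇^μ σ + Rw σ + (1−n)μ²σ` and the nonnegativity
`(∇^{μ*}∇^μ σ, σ) = ‖∇^μ σ‖² ≥ 0`, both valid on the compact manifold `M`. -/
theorem dirac_eigenvalue_lower_bound
    {M Γ VF : Type*} [NormedAddCommGroup Γ] [InnerProductSpace ℝ Γ]
    (n : ℕ) (hn : 2 ≤ n)
    (nabla cl : VF → Γ →ₗ[ℝ] Γ)
    (D Rw : Γ →ₗ[ℝ] Γ)
    (ip : Γ → Γ → M → ℝ)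
    (hip_sub : ∀ (σ τ ρ : Γ) (p : M), ip (σ - τ) ρ p = ip σ ρ p - ip τ ρ p)
    (hip_smul : ∀ (r : ℝ) (σ τ : Γ) (p : M), ip (r • σ) τ p = r * ip σ τ p)
    (hint : ∀ σ τ : Γ, (∀ p, 0 ≤ ip σ τ p) → 0 ≤ ⟪σ, τ⟫_ℝ)
    (lapF : ℝ → Γ →ₗ[ℝ] Γ)
    (hlapF : ∀ (f : ℝ) (σ : Γ),
      D (D σ) - (2 * f) • D σ + (f ^ 2) • σ
        = lapF f σ + Rw σ + ((1 - (n : ℝ)) * f ^ 2) • σ)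
    (hlapF_nonneg : ∀ (f : ℝ) (σ : Γ), 0 ≤ ⟪lapF f σ, σ⟫_ℝ)
    (R0 : ℝ)
    (hR0 : ∀ (σ : Γ) (p : M), R0 * ip σ σ p ≤ ip (Rw σ) σ p)
    (μ : ℝ) (σ : Γ) (hσ : σ ≠ 0) (heig : D σ = μ • σ) :
    ((n : ℝ) / ((n : ℝ) - 1)) * R0 ≤ μ ^ 2 :=
  dirac_eigenvalue_lower_bound_general n hn D Rw ip hip_sub hip_smul hint lapF hlapF hlapF_nonneg R0
    hR0 μ σ hσ heig
end
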